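/- For positive integers n and s, Σ_{|μ|=n} X^{l(μ)-1}/z_μ · (Σ_{i=1}^{l(μ)} (μ_i)_s) = (s-1)! · Σ_{k=1}^{min(n,s)} C(s,k)·C(X+n-1, n-k), as polynomials in the indeterminate X. -/

import Mathlib

open Finset

/-- Rising factorial `(a)_s = a(a+1)⋯(a+s-1)`. -/
def asc (a : ℚ) (s : ℕ) : ℚ := ∏ t ∈ range s, (a + t)

/-- Falling factorial `[Y]_m = Y(Y-1)⋯(Y-m+1)`. -/
def desc (a : ℚ) (m : ℕ) : ℚ := ∏ t ∈ range m, (a - t)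

/-- `z_μ = Π_i i^{m_i(μ)}·m_i(μ)!`, where `m_i(μ)` is the multiplicity of `i` in `μ`. -/
def zpart (n : ℕ) (μ : n.Partition) : ℚ :=
  ∏ i ∈ range (n + 1), ((i : ℚ) ^ (μ.parts.count i) * (Nat.factorial (μ.parts.count i) : ℚ))

/-!
Expanding `∑ᵢ (μᵢ)ₛ` by multiplicities and deleting one marked part `i` from `μ` reduces
the left side to `∑_{i ≥ 1} ((i)ₛ / i) · A_{n-i}` with `A_m = ∑_{|ν| = m} X^{l(ν)} / z_ν`.
Marking a part in the same way gives `m·A_m = X·(A_0 + ⋯ + A_{m-1})`, so `A_m = C(X+m-1, m)`, while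
`(i)ₛ / i = (s-1)!·C(s+i-1, i)`. Both sides are then `(s-1)!` times a Vandermonde convolution
minus its `i = 0` term, `∑ᵢ C(s+i-1, i)·C(X+n-i-1, n-i)` on the left and
`∑ₖ C(s, k)·C(X+n-1, n-k)` on the right, and both convolutions equal `C(X+s+n-1, n)`.
-/

theorem Finset.sum_Icc_one_eq_sub {M : Type*} [AddCommGroup M] (f : ℕ → M) (n : ℕ) :
    ∑ i ∈ Icc 1 n, f i = ∑ i ∈ range (n + 1), f i - f 0 := by
  rw [← Ico_add_one_right_eq_Icc, sum_Ico_eq_sub _ (by omega), sum_range_one]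

theorem Finset.sum_Icc_one_comp_sub {M : Type*} [AddCommMonoid M] (f : ℕ → M) (n : ℕ) :
    ∑ i ∈ Icc 1 n, f (n - i) = ∑ j ∈ range n, f j := by
  rw [← Ico_add_one_right_eq_Icc, sum_Ico_reflect f 1 le_rfl, Nat.add_sub_cancel,
    Nat.sub_self, Nat.Ico_zero_eq_range]

namespace Ring

variable {R : Type*} [CommRing R] [BinomialRing R]

attribute [local instance] BinomialRing.toIsAddTorsionFree

theorem sum_range_multichoose (r : R) (k : ℕ) :
    ∑ j ∈ range (k + 1), multichoose r j = multichoose (r + 1) k := by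
  induction k with
  | zero => simp
  | succ k ih => rw [sum_range_succ, ih, multichoose_succ_succ, add_comm]

theorem succ_mul_multichoose_succ (r : R) (k : ℕ) :
    (k + 1) * multichoose r (k + 1) = r * multichoose (r + 1) k := by
  -- after multiplying by `k!`, both sides are `r (r + 1) ⋯ (r + k)`
  rw [← nsmul_right_inj (Nat.factorial_ne_zero k), nsmul_eq_mul, nsmul_eq_mul, ← mul_assoc,
    ← Nat.cast_add_one, ← Nat.cast_mul, mul_comm (k.factorial : ℕ), ← Nat.factorial_succ,
    ← nsmul_eq_mul, mul_left_comm, ← nsmul_eq_mul,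
    factorial_nsmul_multichoose_eq_ascPochhammer, factorial_nsmul_multichoose_eq_ascPochhammer,
    ascPochhammer_succ_left, Polynomial.smeval_X_mul, Polynomial.smeval_comp]
  simp [Polynomial.smeval_add, Polynomial.smeval_X, Polynomial.smeval_one]

/-- Follows from `add_choose_eq` at `-r`, `-s`, since `choose (-r) k = ±multichoose r k`. -/
theorem multichoose_add (r s : R) (n : ℕ) :
    multichoose (r + s) n =
      ∑ ij ∈ antidiagonal n, multichoose r ij.1 * multichoose s ij.2 := by
  have h := add_choose_eq (r := -r) (s := -s) n (Commute.all _ _)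
  rw [← neg_add, choose_neg'] at h
  have hsign : ∀ ij ∈ antidiagonal n, choose (-r) ij.1 * choose (-s) ij.2 =
      Int.negOnePow n • (multichoose r ij.1 * multichoose s ij.2) := by
    rintro ⟨i, j⟩ hij
    rw [HasAntidiagonal.mem_antidiagonal] at hij
    rw [choose_neg', choose_neg', smul_mul_smul_comm, ← Int.negOnePow_add, ← hij]
    push_cast
    rfl
  rw [sum_congr rfl hsign, ← smul_sum] at h
  exact smul_left_cancel _ h

theorem sum_Icc_multichoose_mul_multichoose (r x : R) (n : ℕ) :
    ∑ k ∈ Icc 1 n, multichoose r k * multichoose x (n - k) =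
      multichoose (r + x) n - multichoose x n := by
  rw [multichoose_add, Nat.sum_antidiagonal_eq_sum_range_succ
    (fun i j => multichoose r i * multichoose x j), sum_Icc_one_eq_sub]
  simp

theorem multichoose_natCast_succ (b i : ℕ) :
    multichoose ((b + 1 : ℕ) : R) i = (i + b).choose i := by
  rw [multichoose_eq, ← choose_natCast]
  congr 1
  push_cast
  ring

theorem sum_Icc_choose_mul_choose (r x : R) (n : ℕ) :
    ∑ k ∈ Icc 1 n, choose r k * choose x (n - k) = choose (r + x) n - choose x n := by
  rw [add_choose_eq n (Commute.all _ _), Nat.sum_antidiagonal_eq_sum_range_succ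
    (fun i j => choose r i * choose x j), sum_Icc_one_eq_sub]
  simp

end Ring

theorem desc_eq_factorial_mul_choose (a : ℚ) (m : ℕ) :
    desc a m = m.factorial * Ring.choose a m := by
  rw [← nsmul_eq_mul, ← Ring.descPochhammer_eq_factorial_smul_choose,
    ← Polynomial.aeval_eq_smeval, Polynomial.aeval_def, Polynomial.eval₂_eq_eval_map,
    descPochhammer_map, descPochhammer_eval_eq_prod_range, desc]

theorem asc_natCast_succ (i b : ℕ) : asc i (b + 1) = i * b.factorial * (i + b).choose i := by
  have h : asc i (b + 1) = (i.ascFactorial (1 + b) : ℕ) := by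
    simp [asc, Nat.ascFactorial_eq_prod_range, add_comm 1 b]
  rw [h, ← Nat.ascFactorial_mul_ascFactorial, Nat.ascFactorial_eq_factorial_mul_choose,
    Nat.choose_symm_add]
  simp [mul_assoc, Nat.ascFactorial]

namespace Nat.Partition

theorem sum_map_parts_eq_sum_count {M : Type*} [AddCommMonoid M] {n : ℕ} (μ : n.Partition)
    (g : ℕ → M) : (μ.parts.map g).sum = ∑ i ∈ Icc 1 n, μ.parts.count i • g i := by
  rw [sum_multiset_map_count]
  refine sum_subset (fun i hi => ?_) (fun i _ hi => ?_)
  · rw [Multiset.mem_toFinset] at hi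
    exact mem_Icc.2 ⟨μ.parts_pos hi, le_of_mem_parts hi⟩
  · rw [Multiset.count_eq_zero.2 (mt Multiset.mem_toFinset.2 hi), zero_smul]

theorem sum_count_mul_eq {n : ℕ} (μ : n.Partition) :
    ∑ i ∈ Icc 1 n, μ.parts.count i * i = n := by
  simpa [μ.parts_sum] using (sum_map_parts_eq_sum_count μ id).symm

end Nat.Partition

open Nat.Partition

theorem zpart_pos {n : ℕ} (μ : n.Partition) : 0 < zpart n μ := by
  refine prod_pos fun i _ => ?_
  rcases (μ.parts.count i).eq_zero_or_pos with h | h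
  · simp [h]
  · have := μ.parts_pos (Multiset.count_pos.1 h)
    positivity

theorem zpart_eq_prod_range {m N : ℕ} (hmN : m ≤ N) (ν : m.Partition) :
    zpart m ν = ∏ i ∈ range (N + 1),
      ((i : ℚ) ^ (ν.parts.count i) * (Nat.factorial (ν.parts.count i) : ℚ)) := by
  refine prod_subset (range_subset_range.2 (by omega)) fun i _ hi => ?_
  have : ν.parts.count i = 0 :=
    Multiset.count_eq_zero.2 fun h => hi (mem_range.2 (Nat.lt_succ_of_le (le_of_mem_parts h)))
  simp [this]

theorem zpart_partitionWithPartEquiv_symm {n a : ℕ} (ha1 : 1 ≤ a) (ha : a ≤ n)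
    (ν : (n - a).Partition) :
    zpart n ((partitionWithPartEquiv ha1 ha).symm ν).1 =
      a * (ν.parts.count a + 1) * zpart (n - a) ν := by
  have hmem : a ∈ range (n + 1) := mem_range.2 (by omega)
  rw [zpart, zpart_eq_prod_range (Nat.sub_le n a), ← mul_prod_erase _ _ hmem,
    ← mul_prod_erase _ _ hmem, partitionWithPartEquiv_symm_apply_parts,
    Multiset.count_cons_self,
    prod_congr rfl fun i hi => by rw [Multiset.count_cons_of_ne (ne_of_mem_erase hi)]]
  push_cast [Nat.factorial_succ, pow_succ]
  ring

/-- Marking one part equal to `a`: removing it is a bijection onto the partitions of `n - a`,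
and the multiplicity `m_a` in the numerator cancels the factor `m_a` of `z_μ`. -/
theorem sum_count_mul_div_zpart {n a : ℕ} (ha1 : 1 ≤ a) (ha : a ≤ n) (f : ℕ → ℚ) :
    ∑ μ : n.Partition, μ.parts.count a * f μ.parts.card / zpart n μ =
      (a : ℚ)⁻¹ * ∑ ν : (n - a).Partition, f (ν.parts.card + 1) / zpart (n - a) ν := by
  rw [← sum_filter_of_ne (p := fun μ : n.Partition => a ∈ μ.parts) fun μ _ h =>
      Multiset.count_ne_zero.1 fun h0 => h (by simp [h0]),
    sum_subtype _ fun μ => mem_filter_univ μ, ← (partitionWithPartEquiv ha1 ha).symm.sum_comp,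
    mul_sum]
  refine sum_congr rfl fun ν _ => ?_
  rw [zpart_partitionWithPartEquiv_symm, partitionWithPartEquiv_symm_apply_parts,
    Multiset.count_cons_self, Multiset.card_cons]
  have := zpart_pos ν
  have : (a : ℚ) ≠ 0 := by positivity
  field_simp
  push_cast
  ring

/-- Weighting each part `i` by its size shows that `m·A_m = X·(A_0 + ⋯ + A_{m-1})` for
`A_m = ∑_{|ν| = m} X^{l(ν)}/z_ν`, the recursion satisfied by `multichoose X m`. -/
theorem sum_pow_card_div_zpart (X : ℚ) (m : ℕ) :
    ∑ ν : m.Partition, X ^ ν.parts.card / zpart m ν = Ring.multichoose X m := by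
  induction m using Nat.strong_induction_on with | _ m ih
  rcases m with _ | k
  · simp [zpart]
  have key : ((k + 1 : ℕ) : ℚ) * ∑ ν : (k + 1).Partition, X ^ ν.parts.card / zpart (k + 1) ν =
      X * ∑ j ∈ range (k + 1), Ring.multichoose X j := calc
    _ = ∑ ν : (k + 1).Partition, ∑ i ∈ Icc 1 (k + 1),
          (i : ℚ) * (ν.parts.count i * X ^ ν.parts.card / zpart (k + 1) ν) := by
      rw [mul_sum]
      refine sum_congr rfl fun ν _ => ?_
      have hsize : ((k + 1 : ℕ) : ℚ) = ∑ i ∈ Icc 1 (k + 1), (ν.parts.count i : ℚ) * i := by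
        exact_mod_cast ν.sum_count_mul_eq.symm
      rw [hsize, sum_mul]
      exact sum_congr rfl fun i _ => by ring
    _ = ∑ i ∈ Icc 1 (k + 1), (i : ℚ) *
          ∑ ν : (k + 1).Partition, ν.parts.count i * X ^ ν.parts.card / zpart (k + 1) ν := by
      rw [sum_comm]
      simp only [mul_sum]
    _ = ∑ i ∈ Icc 1 (k + 1), X * Ring.multichoose X (k + 1 - i) := by
      refine sum_congr rfl fun i hi => ?_
      obtain ⟨hi1, hik⟩ := mem_Icc.1 hi
      have : (i : ℚ) ≠ 0 := by positivity
      rw [sum_count_mul_div_zpart hi1 hik, mul_inv_cancel_left₀ this, ← ih (k + 1 - i) (by omega),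
        mul_sum]
      exact sum_congr rfl fun ν _ => by ring
    _ = X * ∑ j ∈ range (k + 1), Ring.multichoose X j := by
      rw [← mul_sum, sum_Icc_one_comp_sub (fun j => Ring.multichoose X j)]
  rw [Ring.sum_range_multichoose, ← Ring.succ_mul_multichoose_succ] at key
  push_cast at key
  exact mul_left_cancel₀ (by positivity) key

theorem sum_pow_card_pred_div_zpart_mul_sum_asc (n b : ℕ) (X : ℚ) :
    ∑ μ : n.Partition, X ^ (μ.parts.card - 1) / zpart n μ *
        (μ.parts.map fun m : ℕ => asc (m : ℚ) (b + 1)).sum =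
      b.factorial * ∑ i ∈ Icc 1 n, Ring.multichoose ((b + 1 : ℕ) : ℚ) i *
        Ring.multichoose X (n - i) := calc
  _ = ∑ μ : n.Partition, ∑ i ∈ Icc 1 n,
        asc i (b + 1) * (μ.parts.count i * X ^ (μ.parts.card - 1) / zpart n μ) := by
    refine sum_congr rfl fun μ _ => ?_
    rw [sum_map_parts_eq_sum_count, mul_sum]
    exact sum_congr rfl fun i _ => by rw [nsmul_eq_mul]; ring
  _ = ∑ i ∈ Icc 1 n, asc i (b + 1) *
        ∑ μ : n.Partition, μ.parts.count i * X ^ (μ.parts.card - 1) / zpart n μ := by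
    rw [sum_comm]
    simp only [mul_sum]
  _ = _ := by
    rw [mul_sum]
    refine sum_congr rfl fun i hi => ?_
    obtain ⟨hi1, hin⟩ := mem_Icc.1 hi
    have : (i : ℚ) ≠ 0 := by positivity
    rw [sum_count_mul_div_zpart hi1 hin (fun c => X ^ (c - 1))]
    simp only [Nat.add_sub_cancel]
    rw [sum_pow_card_div_zpart, asc_natCast_succ, Ring.multichoose_natCast_succ]
    field_simp

theorem stmt_17_general (n s : ℕ) (hs : 1 ≤ s) (X : ℚ) :
    ∑ μ : n.Partition, X ^ (μ.parts.card - 1) / zpart n μ *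
        (μ.parts.map fun m => asc (m : ℚ) s).sum =
      (Nat.factorial (s - 1) : ℚ) * ∑ k ∈ Icc 1 (min n s),
        (Nat.choose s k : ℚ) * (desc (X + n - 1) (n - k) / Nat.factorial (n - k)) := by
  obtain ⟨b, rfl⟩ : ∃ b, s = b + 1 := ⟨s - 1, by omega⟩
  -- the statement maps over `μ.parts` coerced to `Multiset ℚ`, a monadic bind
  have hcoe (μ : n.Partition) : (μ.parts.map fun m => asc (m : ℚ) (b + 1)) =
      μ.parts.map fun m : ℕ => asc (m : ℚ) (b + 1) := by
    simp only [Multiset.pure_def, Multiset.bind_def, Multiset.bind_singleton, Multiset.map_map,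
      Function.comp_apply]
  have hdesc (k : ℕ) : desc (X + n - 1) (n - k) / (n - k).factorial =
      Ring.choose (X + n - 1) (n - k) := by
    rw [desc_eq_factorial_mul_choose, mul_div_cancel_left₀ _ (by positivity)]
  have htrunc : ∑ k ∈ Icc 1 (min n (b + 1)),
        ((b + 1).choose k : ℚ) * Ring.choose (X + n - 1) (n - k) =
      ∑ k ∈ Icc 1 n, ((b + 1).choose k : ℚ) * Ring.choose (X + n - 1) (n - k) := by
    refine sum_subset (Icc_subset_Icc_right (min_le_left _ _)) fun k hk hk' => ?_
    simp only [mem_Icc] at hk hk'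
    rw [Nat.choose_eq_zero_of_lt (by omega), Nat.cast_zero, zero_mul]
  simp only [hcoe, hdesc, sum_pow_card_pred_div_zpart_mul_sum_asc, Nat.add_sub_cancel]
  rw [htrunc]
  simp only [← Ring.choose_natCast]
  rw [Ring.sum_Icc_multichoose_mul_multichoose, Ring.sum_Icc_choose_mul_choose,
    Ring.multichoose_eq, Ring.multichoose_eq]
  ring_nf

theorem stmt_17 (n s : ℕ) (hn : 1 ≤ n) (hs : 1 ≤ s) (X : ℚ) :
    ∑ μ : n.Partition, X ^ (μ.parts.card - 1) / zpart n μ *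
        (μ.parts.map fun m => asc (m : ℚ) s).sum =
      (Nat.factorial (s - 1) : ℚ) * ∑ k ∈ Icc 1 (min n s),
        (Nat.choose s k : ℚ) * (desc (X + n - 1) (n - k) / Nat.factorial (n - k)) :=
  stmt_17_general n s hs X
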